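/- Let n ≥ 1 be an integer and let b ∈ ℝ with b > 0. If n is even, then all n zeros of F(−n, b; −2n; z) are non-real. If n is odd, then F(−n, b; −2n; z) has exactly one real zero, which is negative, and the remaining n − 1 zeros are all non-real. -/

import Mathlib

open Polynomial
open scoped Classical

/-- The hypergeometric polynomial `F(-n, b; c; z) = ∑_{k=0}^n ((-n)_k (b)_k / ((c)_k k!)) z^k`,
viewed as a polynomial over `ℂ` (with real parameters `b`, `c`). -/
noncomputable def hypPoly (n : ℕ) (b c : ℝ) : Polynomial ℂ :=
  ∑ k ∈ Finset.range (n + 1),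
    Polynomial.C ((((((ascPochhammer ℝ k).eval (-(n : ℝ))) * ((ascPochhammer ℝ k).eval b)) /
      (((ascPochhammer ℝ k).eval c) * (Nat.factorial k : ℝ))) : ℝ) : ℂ) * Polynomial.X ^ k

/-- Number of zeros of `p`, counted with multiplicity, lying in the set `S ⊆ ℂ`. -/
noncomputable def countIn (p : Polynomial ℂ) (S : Set ℂ) : ℕ :=
  Multiset.card (p.roots.filter (fun z => z ∈ S))

/-!
For `n ≤ N` put `F(x) = F(-n, b; -N; x)`. Expanding `(t + s x)^n` binomially and integrating
against `e^(-s-t) s^(b-1) t^(N-n)` over the positive quadrant gives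
`N! Γ(b) F(x) = ∑ₖ C(n,k) Γ(b+k) (N-k)! xᵏ = ∫∫ e^(-s-t) s^(b-1) t^(N-n) (t + s x)^n ds dt`,
which is positive for every real `x` when `n` is even. For odd `n` the contiguous relation
`F' = (n b / N) F(-(n-1), b+1; -(N-1); x)` makes `F' > 0` on `ℝ`, so `F` has exactly one real
zero; it is simple, and negative because `F(0) = 1`. Taking `N = 2n` gives the theorem.
-/

open MeasureTheory Set Real Finset Filter
open scoped Nat

section GammaMoments

variable {c : ℝ}

lemma integrableOn_exp_neg_mul_rpow_mul_pow (hc : 0 < c) (k : ℕ) :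
    IntegrableOn (fun t : ℝ => exp (-t) * t ^ (c - 1) * t ^ k) (Ioi 0) := by
  refine (GammaIntegral_convergent (show 0 < c + k by positivity)).congr_fun
    (fun t (ht : 0 < t) => ?_) measurableSet_Ioi
  rw [mul_assoc, ← rpow_natCast t k, ← rpow_add ht]
  ring_nf

lemma integral_exp_neg_mul_rpow_mul_pow (hc : 0 < c) (k : ℕ) :
    ∫ t in Ioi 0, exp (-t) * t ^ (c - 1) * t ^ k = Gamma (c + k) := by
  rw [Gamma_eq_integral (by positivity)]
  refine setIntegral_congr_fun measurableSet_Ioi (fun t (ht : 0 < t) => ?_)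
  rw [mul_assoc, ← rpow_natCast t k, ← rpow_add ht]
  ring_nf

variable {ι : Type*} (s : Finset ι) (a : ι → ℝ) (e : ι → ℕ)

lemma exp_neg_mul_rpow_mul_sum (t : ℝ) :
    exp (-t) * t ^ (c - 1) * ∑ i ∈ s, a i * t ^ e i
      = ∑ i ∈ s, a i * (exp (-t) * t ^ (c - 1) * t ^ e i) := by
  rw [mul_sum]
  exact sum_congr rfl fun i _ => by ring

lemma integrableOn_exp_neg_mul_rpow_mul_sum (hc : 0 < c) :
    IntegrableOn (fun t : ℝ => exp (-t) * t ^ (c - 1) * ∑ i ∈ s, a i * t ^ e i) (Ioi 0) := by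
  simp_rw [exp_neg_mul_rpow_mul_sum]
  exact integrable_finsetSum _ fun i _ =>
    (integrableOn_exp_neg_mul_rpow_mul_pow hc (e i)).const_mul (a i)

lemma integral_exp_neg_mul_rpow_mul_sum (hc : 0 < c) :
    ∫ t in Ioi 0, exp (-t) * t ^ (c - 1) * ∑ i ∈ s, a i * t ^ e i
      = ∑ i ∈ s, a i * Gamma (c + e i) := by
  simp_rw [exp_neg_mul_rpow_mul_sum]
  rw [integral_finsetSum _ fun i _ =>
    (integrableOn_exp_neg_mul_rpow_mul_pow hc (e i)).const_mul (a i)]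
  simp_rw [integral_const_mul, integral_exp_neg_mul_rpow_mul_pow hc]

end GammaMoments

lemma setIntegral_pos_of_ae_pos {X : Type*} [MeasurableSpace X] {μ : Measure X} {s : Set X}
    {f : X → ℝ} (hs : μ s ≠ 0) (hfi : IntegrableOn f s μ) (hf : ∀ᵐ x ∂μ.restrict s, 0 < f x) :
    0 < ∫ x in s, f x ∂μ := by
  rw [integral_pos_iff_support_of_nonneg_ae (hf.mono fun _ h => h.le) hfi, pos_iff_ne_zero]
  intro hsupp
  have : NeBot (ae (μ.restrict s)) := ae_restrict_neBot.2 hs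
  obtain ⟨x, hx, hx0⟩ := (hf.and (measure_eq_zero_iff_ae_notMem.1 hsupp)).exists
  exact hx0 hx.ne'

theorem sum_choose_mul_Gamma_mul_factorial_pos {m N : ℕ} (hm : Even m) (hmN : m ≤ N) {b : ℝ}
    (hb : 0 < b) (x : ℝ) :
    0 < ∑ k ∈ range (m + 1), (m.choose k : ℝ) * Gamma (b + k) * (N - k)! * x ^ k := by
  have binomial (t s : ℝ) :
      (t + s * x) ^ m = ∑ k ∈ range (m + 1), (m.choose k * x ^ k * t ^ (m - k)) * s ^ k := by
    rw [add_comm, add_pow]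
    exact sum_congr rfl fun k _ => by ring
  have inner_pos (t : ℝ) (ht : 0 < t) :
      0 < ∑ k ∈ range (m + 1), (m.choose k * x ^ k * t ^ (m - k)) * Gamma (b + k) := by
    rw [← integral_exp_neg_mul_rpow_mul_sum _ _ _ hb]
    simp_rw [← binomial]
    have hint := integrableOn_exp_neg_mul_rpow_mul_sum (range (m + 1))
      (fun k => m.choose k * x ^ k * t ^ (m - k)) (fun k => k) hb
    simp_rw [← binomial] at hint
    refine setIntegral_pos_of_ae_pos (by simp) hint ?_
    filter_upwards [ae_restrict_mem measurableSet_Ioi, ae_restrict_of_ae (volume.ae_ne (-t / x))]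
      with s (hs : 0 < s) hne
    have hts : t + s * x ≠ 0 := by
      intro h
      have hx : x ≠ 0 := by rintro rfl; simp at h; exact ht.ne' h
      exact hne (by field_simp; linarith)
    have := hm.pow_pos hts
    positivity
  have outer : ∑ k ∈ range (m + 1), (m.choose k : ℝ) * Gamma (b + k) * (N - k)! * x ^ k
      = ∫ t in Ioi 0, exp (-t) * t ^ (((N - m : ℕ) : ℝ) + 1 - 1) *
          ∑ k ∈ range (m + 1), (m.choose k * x ^ k * Gamma (b + k)) * t ^ (m - k) := by
    rw [integral_exp_neg_mul_rpow_mul_sum _ _ _ (by positivity)]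
    refine sum_congr rfl fun k hk => ?_
    have hk : k ≤ m := Nat.lt_succ_iff.mp (mem_range.mp hk)
    have hexp : ((N - m : ℕ) : ℝ) + 1 + (m - k : ℕ) = (N - k : ℕ) + 1 := by
      push_cast [hk, hmN, hk.trans hmN]
      ring
    rw [hexp, Gamma_nat_eq_factorial]
    ring
  rw [outer]
  refine setIntegral_pos_of_ae_pos (by simp) (integrableOn_exp_neg_mul_rpow_mul_sum _ _ _
    (by positivity)) ?_
  filter_upwards [ae_restrict_mem measurableSet_Ioi] with t (ht : 0 < t)
  have := inner_pos t ht
  rw [show ∑ k ∈ range (m + 1), (m.choose k * x ^ k * t ^ (m - k)) * Gamma (b + k)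
    = ∑ k ∈ range (m + 1), (m.choose k * x ^ k * Gamma (b + k)) * t ^ (m - k) from
    sum_congr rfl fun k _ => by ring] at this
  positivity

lemma Real.Gamma_add_nat_eq_ascPochhammer_mul {b : ℝ} (hb : 0 < b) (k : ℕ) :
    Gamma (b + k) = (ascPochhammer ℝ k).eval b * Gamma b := by
  induction k with
  | zero => simp
  | succ k ih =>
    rw [Nat.cast_succ, ← add_assoc, Gamma_add_one (by positivity), ih, ascPochhammer_succ_eval]
    ring

lemma ascPochhammer_eval_succ_left (k : ℕ) (a : ℝ) :
    (ascPochhammer ℝ (k + 1)).eval a = a * (ascPochhammer ℝ k).eval (a + 1) := by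
  simp [ascPochhammer_succ_left, eval_comp]

noncomputable def hypCoeff (n : ℕ) (b c : ℝ) (k : ℕ) : ℝ :=
  (ascPochhammer ℝ k).eval (-(n : ℝ)) * (ascPochhammer ℝ k).eval b /
    ((ascPochhammer ℝ k).eval c * (k ! : ℝ))

noncomputable def hypPolyReal (n : ℕ) (b c : ℝ) : ℝ[X] :=
  ∑ k ∈ range (n + 1), C (hypCoeff n b c k) * X ^ k

section HypPolyReal

variable (n : ℕ) (b c : ℝ)

lemma hypPoly_eq_map : hypPoly n b c = (hypPolyReal n b c).map (algebraMap ℝ ℂ) := by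
  simp [hypPoly, hypPolyReal, hypCoeff, Polynomial.map_sum]

lemma coeff_hypPolyReal (k : ℕ) :
    (hypPolyReal n b c).coeff k = if k ≤ n then hypCoeff n b c k else 0 := by
  simp [hypPolyReal, finsetSum_coeff, coeff_C_mul, coeff_X_pow]

lemma eval_zero_hypPolyReal : (hypPolyReal n b c).eval 0 = 1 := by
  simp [← coeff_zero_eq_eval_zero, coeff_hypPolyReal, hypCoeff]

lemma natDegree_hypPolyReal (h : hypCoeff n b c n ≠ 0) : (hypPolyReal n b c).natDegree = n := by
  refine natDegree_eq_of_le_of_coeff_ne_zero ?_ (by simpa [coeff_hypPolyReal] using h)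
  refine natDegree_sum_le_of_forall_le _ _ fun k hk => (natDegree_C_mul_X_pow_le _ _).trans ?_
  exact Nat.lt_succ_iff.mp (mem_range.mp hk)

lemma succ_mul_hypCoeff_succ (hn : n ≠ 0) (k : ℕ) :
    (k + 1 : ℝ) * hypCoeff n b c (k + 1)
      = -(n : ℝ) * b / c * hypCoeff (n - 1) (b + 1) (c + 1) k := by
  have hn' : -((n - 1 : ℕ) : ℝ) = -n + 1 := by push_cast [Nat.one_le_iff_ne_zero.2 hn]; ring
  simp only [hypCoeff, ascPochhammer_eval_succ_left, hn', Nat.factorial_succ, Nat.cast_mul,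
    Nat.cast_succ]
  field_simp

lemma derivative_hypPolyReal (hn : n ≠ 0) :
    derivative (hypPolyReal n b c)
      = C (-(n : ℝ) * b / c) * hypPolyReal (n - 1) (b + 1) (c + 1) := by
  obtain ⟨m, rfl⟩ := Nat.exists_eq_add_one_of_ne_zero hn
  rw [hypPolyReal, derivative_sum, sum_range_succ', hypPolyReal, mul_sum]
  simp only [derivative_C_mul_X_pow, Nat.cast_zero, mul_zero, C_0, zero_mul, add_zero,
    Nat.add_sub_cancel, Nat.cast_succ]
  refine sum_congr rfl fun k _ => ?_
  rw [mul_comm _ ((k : ℝ) + 1), succ_mul_hypCoeff_succ _ _ _ hn, Nat.add_sub_cancel,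
    C_mul, mul_assoc, Nat.cast_succ]

end HypPolyReal

section NegNatCast

variable {n N k : ℕ} {b : ℝ}

lemma hypCoeff_neg_natCast :
    hypCoeff n b (-N) k
      = n.descFactorial k * (ascPochhammer ℝ k).eval b / (N.descFactorial k * k !) := by
  simp only [hypCoeff, ascPochhammer_eval_neg_eq_descPochhammer,
    descPochhammer_eval_eq_descFactorial]
  rw [mul_assoc, mul_assoc, mul_div_mul_left _ _ (pow_ne_zero k (neg_ne_zero.2 one_ne_zero))]

lemma hypCoeff_neg_natCast_pos (hk : k ≤ n) (hnN : n ≤ N) (hb : 0 < b) :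
    0 < hypCoeff n b (-N) k := by
  have := Nat.descFactorial_pos.2 hk
  have := Nat.descFactorial_pos.2 (hk.trans hnN)
  rw [hypCoeff_neg_natCast]
  have := ascPochhammer_pos k b hb
  positivity

lemma hypCoeff_neg_natCast_mul (hk : k ≤ n) (hnN : n ≤ N) (hb : 0 < b) :
    hypCoeff n b (-N) k * (N ! * Gamma b) = n.choose k * Gamma (b + k) * (N - k)! := by
  have := Nat.descFactorial_pos.2 (hk.trans hnN)
  rw [hypCoeff_neg_natCast, Gamma_add_nat_eq_ascPochhammer_mul hb,
    ← Nat.factorial_mul_descFactorial (hk.trans hnN), Nat.descFactorial_eq_factorial_mul_choose]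
  push_cast
  field_simp

theorem eval_hypPolyReal_neg_natCast_pos (hn : Even n) (hnN : n ≤ N) (hb : 0 < b) (x : ℝ) :
    0 < (hypPolyReal n b (-N)).eval x := by
  have hsum : (hypPolyReal n b (-N)).eval x * (N ! * Gamma b)
      = ∑ k ∈ range (n + 1), (n.choose k : ℝ) * Gamma (b + k) * (N - k)! * x ^ k := by
    rw [hypPolyReal, eval_finsetSum, sum_mul]
    refine sum_congr rfl fun k hk => ?_
    rw [eval_mul, eval_C, eval_pow, eval_X]
    linear_combination
      x ^ k * hypCoeff_neg_natCast_mul (Nat.lt_succ_iff.mp (mem_range.mp hk)) hnN hb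
  have := Gamma_pos_of_pos hb
  exact (pos_iff_pos_of_mul_pos (hsum ▸ sum_choose_mul_Gamma_mul_factorial_pos hn hnN hb x)).mpr
    (by positivity)

theorem eval_derivative_hypPolyReal_neg_natCast_pos (hn : Odd n) (hnN : n ≤ N) (hb : 0 < b)
    (x : ℝ) : 0 < (derivative (hypPolyReal n b (-N))).eval x := by
  have hn0 : (0 : ℝ) < n := by exact_mod_cast hn.pos
  have hN : (0 : ℝ) < N := by exact_mod_cast hn.pos.trans_le hnN
  have hc : -(N : ℝ) + 1 = -((N - 1 : ℕ) : ℝ) := by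
    push_cast [hn.pos.trans_le hnN]; ring
  rw [derivative_hypPolyReal _ _ _ hn.pos.ne', eval_mul, eval_C, hc, neg_mul, neg_div_neg_eq]
  exact mul_pos (by positivity) (eval_hypPolyReal_neg_natCast_pos
    (Nat.Odd.sub_odd hn odd_one) (by omega) (by linarith) x)

end NegNatCast

lemma Real.exists_isRoot_of_odd_natDegree {p : ℝ[X]} (hp : Odd p.natDegree) :
    ∃ x, p.IsRoot x := by
  wlog hlc : 0 < p.leadingCoeff generalizing p
  · have hp0 : p ≠ 0 := by rintro rfl; simp at hp
    have hlc' : 0 < (-p).leadingCoeff := by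
      rw [leadingCoeff_neg, neg_pos]
      exact (not_lt.1 hlc).lt_of_ne (leadingCoeff_ne_zero.2 hp0)
    obtain ⟨x, hx⟩ := this (by rwa [natDegree_neg]) hlc'
    exact ⟨x, by simpa using hx⟩
  have hdeg : 0 < p.degree := natDegree_pos_iff_degree_pos.mp hp.pos
  have hreflect_deg : 0 < (p.comp (-X)).degree := by
    rw [← natDegree_pos_iff_degree_pos, natDegree_comp]
    simpa using hp.pos
  have hreflect_lc : (p.comp (-X)).leadingCoeff = -p.leadingCoeff := by
    rw [leadingCoeff_comp (by simp), leadingCoeff_neg, leadingCoeff_X, hp.neg_one_pow]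
    ring
  have hbot : Tendsto p.eval atBot atBot := by
    refine ((tendsto_atBot_of_leadingCoeff_nonpos _ hreflect_deg (by linarith)).comp
      tendsto_neg_atBot_atTop).congr fun x => ?_
    simp [eval_comp]
  obtain ⟨x, hx⟩ := p.continuous.surjective (tendsto_atTop_of_leadingCoeff_nonneg p hdeg hlc.le)
    hbot 0
  exact ⟨x, hx⟩

lemma Polynomial.count_roots_eq_one {K : Type*} [Field K] {P : K[X]} {a : K} (h : P.IsRoot a)
    (h' : ¬ P.derivative.IsRoot a) : P.roots.count a = 1 := by
  have hP : P ≠ 0 := by rintro rfl; simp at h'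
  rw [count_roots]
  exact le_antisymm (not_lt.1 fun h1 => h' ((one_lt_rootMultiplicity_iff_isRoot hP).1 h1).2)
    ((rootMultiplicity_pos hP).2 h)

lemma eval_map_ofReal (p : ℝ[X]) (x : ℝ) : (p.map (algebraMap ℝ ℂ)).eval (x : ℂ) = p.eval x := by
  rw [eval_map_algebraMap]
  exact aeval_algebraMap_apply_eq_algebraMap_eval x p

lemma isRoot_re_of_mem_roots_map {p : ℝ[X]} {z : ℂ} (hz : z ∈ (p.map (algebraMap ℝ ℂ)).roots)
    (him : z.im = 0) : p.IsRoot z.re := by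
  have hroot := (mem_roots'.1 hz).2
  rw [show z = (z.re : ℂ) from Complex.ext rfl (by simp [him]), IsRoot.def,
    eval_map_ofReal] at hroot
  exact_mod_cast hroot

lemma countIn_add_countIn_compl (P : ℂ[X]) (S : Set ℂ) :
    countIn P S + countIn P Sᶜ = Multiset.card P.roots := by
  unfold countIn
  rw [← Multiset.card_add]
  congr 1
  convert Multiset.filter_add_not (fun z => z ∈ S) P.roots

lemma strictMono_eval_of_eval_derivative_pos {p : ℝ[X]} (hp' : ∀ x, 0 < p.derivative.eval x) :
    StrictMono p.eval :=
  strictMono_of_deriv_pos fun x => by rw [Polynomial.deriv]; exact hp' x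

lemma countIn_map_eq_one {p : ℝ[X]} (hp' : ∀ x, 0 < p.derivative.eval x) {x₀ : ℝ}
    (hx₀ : p.IsRoot x₀) {S : Set ℂ} (hS : S ⊆ {z | z.im = 0}) (hx₀S : (x₀ : ℂ) ∈ S) :
    countIn (p.map (algebraMap ℝ ℂ)) S = 1 := by
  have hsimple : (p.map (algebraMap ℝ ℂ)).roots.count (x₀ : ℂ) = 1 := by
    refine count_roots_eq_one ?_ ?_
    · rw [IsRoot, eval_map_ofReal, hx₀.eq_zero, Complex.ofReal_zero]
    · rw [derivative_map, IsRoot, eval_map_ofReal, Complex.ofReal_eq_zero]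
      exact (hp' x₀).ne'
  unfold countIn
  rw [Multiset.filter_congr (q := (· = (x₀ : ℂ))), Multiset.filter_eq', Multiset.card_replicate,
    hsimple]
  intro z hz
  refine ⟨fun hzS => ?_, fun hzx => hzx ▸ hx₀S⟩
  have him : z.im = 0 := hS hzS
  have hre : z.re = x₀ := (strictMono_eval_of_eval_derivative_pos hp').injective <|
    (isRoot_re_of_mem_roots_map hz him).eq_zero.trans hx₀.eq_zero.symm
  exact Complex.ext (by simp [hre]) (by simp [him])

theorem hypPoly_neg2n_zeros_b_pos_general (n : ℕ) (b : ℝ) (hb : 0 < b) :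
    (Even n →
      Multiset.card (hypPoly n b (-(2 * n : ℝ))).roots = n ∧
      ∀ z ∈ (hypPoly n b (-(2 * n : ℝ))).roots, z.im ≠ 0) ∧
    (Odd n →
      countIn (hypPoly n b (-(2 * n : ℝ))) {z | z.im = 0} = 1 ∧
      countIn (hypPoly n b (-(2 * n : ℝ))) {z | z.im = 0 ∧ z.re < 0} = 1 ∧
      countIn (hypPoly n b (-(2 * n : ℝ))) {z | z.im ≠ 0} = n - 1) := by
  set p := hypPolyReal n b (-((2 * n : ℕ) : ℝ))
  have hmap : hypPoly n b (-(2 * n : ℝ)) = p.map (algebraMap ℝ ℂ) := by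
    rw [hypPoly_eq_map, show (-(2 * n : ℝ)) = -((2 * n : ℕ) : ℝ) by push_cast; ring]
  have hdeg : p.natDegree = n :=
    natDegree_hypPolyReal _ _ _ (hypCoeff_neg_natCast_pos le_rfl (by omega) hb).ne'
  have hcard : Multiset.card (p.map (algebraMap ℝ ℂ)).roots = n := by
    rw [IsAlgClosed.card_roots_eq_natDegree, natDegree_map, hdeg]
  rw [hmap]
  refine ⟨fun hn => ⟨hcard, fun z hz him => ?_⟩, fun hn => ?_⟩
  · exact (eval_hypPolyReal_neg_natCast_pos hn (by omega) hb z.re).ne'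
      (isRoot_re_of_mem_roots_map hz him)
  have hp' : ∀ x, 0 < p.derivative.eval x :=
    eval_derivative_hypPolyReal_neg_natCast_pos hn (by omega) hb
  obtain ⟨x₀, hx₀⟩ := Real.exists_isRoot_of_odd_natDegree (hdeg ▸ hn)
  have hx₀_neg : x₀ < 0 := by
    refine (strictMono_eval_of_eval_derivative_pos hp').lt_iff_lt.mp ?_
    simp only [hx₀.eq_zero, p, eval_zero_hypPolyReal, zero_lt_one]
  have hreal := countIn_map_eq_one hp' hx₀ (S := {z | z.im = 0}) subset_rfl (by simp)
  refine ⟨hreal, countIn_map_eq_one hp' hx₀ (fun z hz => hz.1) (by simpa using hx₀_neg), ?_⟩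
  have hsplit := countIn_add_countIn_compl (p.map (algebraMap ℝ ℂ)) {z | z.im = 0}
  rw [show {z : ℂ | z.im = 0}ᶜ = {z | z.im ≠ 0} from rfl] at hsplit
  omega

/-- Zero distribution of `F(-n, b; -2n; z)` for `b > 0`. -/
theorem hypPoly_neg2n_zeros_b_pos (n : ℕ) (hn : 1 ≤ n) (b : ℝ) (hb : 0 < b) :
    (Even n →
      Multiset.card (hypPoly n b (-(2 * n : ℝ))).roots = n ∧
      ∀ z ∈ (hypPoly n b (-(2 * n : ℝ))).roots, z.im ≠ 0) ∧
    (Odd n →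
      countIn (hypPoly n b (-(2 * n : ℝ))) {z | z.im = 0} = 1 ∧
      countIn (hypPoly n b (-(2 * n : ℝ))) {z | z.im = 0 ∧ z.re < 0} = 1 ∧
      countIn (hypPoly n b (-(2 * n : ℝ))) {z | z.im ≠ 0} = n - 1) :=
  hypPoly_neg2n_zeros_b_pos_general n b hb
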